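/- arXiv:1802.06807 — 5 statements merged into one kernel-verified Lean document; each statement's English description precedes it below -/
import Mathlib

section
/- Let S be an m×n sign matrix (all entries in {+1, −1}). Then the sign-rank of S satisfies signrank(S) ≤ SC*(S) + 1, where SC*(S) is the minimum over all row permutations S′ of S of the maximum number of sign changes in any column of S′. -/
/-- The sign-rank of an `m × n` sign matrix `S`: the minimum rank of a real matrix `M`
with `S i j * M i j > 0` for all `i, j`. -/
noncomputable def signRank {m n : ℕ} (S : Matrix (Fin m) (Fin n) ℝ) : ℕ :=
  sInf {r : ℕ | ∃ M : Matrix (Fin m) (Fin n) ℝ, M.rank = r ∧ ∀ i j, S i j * M i j > 0}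

/-- `SC S`: the maximum, over all columns `j`, of the number of sign changes in column `j`,
i.e. of pairs of consecutive row indices where the entries of column `j` differ. -/
noncomputable def maxColSignChanges {m n : ℕ} (S : Matrix (Fin m) (Fin n) ℝ) : ℕ :=
  Finset.univ.sup fun j : Fin n =>
    Nat.card {p : Fin m × Fin m // (p.2 : ℕ) = (p.1 : ℕ) + 1 ∧ S p.1 j ≠ S p.2 j}

/-- `SC* S`: the minimum of `SC S'` over all matrices `S'` obtained from `S` by
permuting its rows. -/
noncomputable def minMaxColSignChanges {m n : ℕ} (S : Matrix (Fin m) (Fin n) ℝ) : ℕ :=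
  ⨅ σ : Equiv.Perm (Fin m), maxColSignChanges (S.submatrix σ id)

/-!
Reorder the rows by a permutation attaining `SC*`. A column with sign changes after rows
`t₁, …, t_c` (`c ≤ SC*`) has the sign pattern of the degree-`c` polynomial
`±∏ₖ (tₖ + 1/2 - X)` evaluated at the row indices `0, 1, …, m - 1`. A matrix whose columns are
values of polynomials of degree at most `d` at common points factors through the
`(d + 1)`-column Vandermonde matrix of those points, so its rank is at most `d + 1`.
-/

open Finset Polynomial

noncomputable def signChanges (s : ℕ → ℝ) (i : ℕ) : Finset ℕ :=
  (range i).filter fun t => s t ≠ s (t + 1)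

lemma signChanges_succ (s : ℕ → ℝ) (i : ℕ) :
    signChanges s (i + 1) =
      if s i ≠ s (i + 1) then insert i (signChanges s i) else signChanges s i := by
  rw [signChanges, range_add_one, filter_insert, signChanges]

lemma eq_mul_neg_one_pow_card_signChanges {s : ℕ → ℝ} (hs : ∀ t, s t = 1 ∨ s t = -1)
    (i : ℕ) : s i = s 0 * (-1) ^ #(signChanges s i) := by
  induction i with
  | zero => simp [signChanges]
  | succ i ih =>
    rw [signChanges_succ]
    split_ifs with hchange
    · have hflip : s (i + 1) = -s i := by
        rcases hs i with h | h <;> rcases hs (i + 1) with h' | h' <;> rw [h, h'] at hchange ⊢ <;>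
          first | exact absurd rfl hchange | norm_num
      rw [card_insert_of_notMem (by simp only [signChanges, mem_filter, mem_range, lt_irrefl,
        false_and, not_false_eq_true]), pow_succ, hflip, ih]
      ring
    · rw [← not_not.mp hchange, ih]

lemma filter_lt_signChanges {s : ℕ → ℝ} {i k : ℕ} (hik : i ≤ k) :
    (signChanges s k).filter (· < i) = signChanges s i := by
  ext t
  simp only [signChanges, mem_filter, mem_range]
  exact ⟨fun ⟨⟨_, h⟩, hi⟩ => ⟨hi, h⟩, fun ⟨hi, h⟩ => ⟨⟨by omega, h⟩, hi⟩⟩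

lemma neg_one_pow_card_filter_lt_mul_prod_pos (F : Finset ℕ) (i : ℕ) :
    0 < (-1 : ℝ) ^ #(F.filter (· < i)) * ∏ t ∈ F, ((t : ℝ) + 1 / 2 - i) := by
  rw [← prod_filter_mul_prod_filter_not F (· < i), ← mul_assoc, ← prod_neg]
  refine mul_pos (prod_pos fun t ht => ?_) (prod_pos fun t ht => ?_)
  · have : (t : ℝ) + 1 ≤ i := by exact_mod_cast (mem_filter.mp ht).2
    linarith
  · have : (i : ℝ) ≤ t := by exact_mod_cast not_lt.mp (mem_filter.mp ht).2
    linarith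

lemma natDegree_prod_C_sub_X_le {K ι : Type*} [CommRing K] [Nontrivial K] (a : ι → K)
    (F : Finset ι) :
    (∏ t ∈ F, (C (a t) - X)).natDegree ≤ #F := by
  refine (natDegree_prod_le _ _).trans ?_
  rw [card_eq_sum_ones]
  exact sum_le_sum fun t _ => by rw [← neg_sub, natDegree_neg, natDegree_X_sub_C]

lemma rank_of_eval_le {K ι κ : Type*} [Field K] [Fintype κ] (x : ι → K) (p : κ → K[X])
    {d : ℕ} (hp : ∀ j, (p j).natDegree ≤ d) :
    (Matrix.of fun i j => (p j).eval (x i)).rank ≤ d + 1 := by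
  let V : Matrix ι (Fin (d + 1)) K := Matrix.of fun i t => x i ^ (t : ℕ)
  let A : Matrix (Fin (d + 1)) κ K := Matrix.of fun t j => (p j).coeff t
  have hfactor : Matrix.of (fun i j => (p j).eval (x i)) = V * A := by
    ext i j
    rw [Matrix.of_apply, eval_eq_sum_range' (Nat.lt_succ_of_le (hp j)), Matrix.mul_apply,
      ← Fin.sum_univ_eq_sum_range]
    exact sum_congr rfl fun t _ => mul_comm _ _
  calc _ = (V * A).rank := by rw [hfactor]
    _ ≤ V.rank := Matrix.rank_mul_le_left V A
    _ ≤ d + 1 := (Matrix.rank_le_card_width V).trans_eq (Fintype.card_fin _)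

-- The padding value `1` keeps the sequence `±1`-valued.
def colSeq {m n : ℕ} (S : Matrix (Fin m) (Fin n) ℝ) (j : Fin n) (t : ℕ) : ℝ :=
  if h : t < m then S ⟨t, h⟩ j else 1

lemma card_signChanges_colSeq_le {m n : ℕ} (S : Matrix (Fin m) (Fin n) ℝ) (j : Fin n) :
    #(signChanges (colSeq S j) (m - 1)) ≤ maxColSignChanges S := by
  classical
  let P : Fin m × Fin m → Prop := fun p => (p.2 : ℕ) = (p.1 : ℕ) + 1 ∧ S p.1 j ≠ S p.2 j
  have hsub : signChanges (colSeq S j) (m - 1) ⊆ (univ.filter P).image fun p => (p.1 : ℕ) := by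
    intro t ht
    simp only [signChanges, mem_filter, mem_range] at ht
    refine mem_image.mpr
      ⟨(⟨t, by omega⟩, ⟨t + 1, by omega⟩), mem_filter.mpr ⟨mem_univ _, rfl, ?_⟩, rfl⟩
    simpa [colSeq, show t < m by omega, show t + 1 < m by omega] using ht.2
  calc #(signChanges (colSeq S j) (m - 1))
      ≤ #((univ.filter P).image fun p => (p.1 : ℕ)) := card_le_card hsub
    _ ≤ #(univ.filter P) := card_image_le
    _ = Nat.card {p // P p} := by rw [Nat.card_eq_fintype_card, Fintype.card_subtype]
    _ ≤ maxColSignChanges S := le_sup (f := fun j => Nat.card {p : Fin m × Fin m //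
          (p.2 : ℕ) = (p.1 : ℕ) + 1 ∧ S p.1 j ≠ S p.2 j}) (mem_univ j)

lemma exists_rank_le_maxColSignChanges_add_one {m n : ℕ} (S : Matrix (Fin m) (Fin n) ℝ)
    (hS : ∀ i j, S i j = 1 ∨ S i j = -1) :
    ∃ M : Matrix (Fin m) (Fin n) ℝ,
      M.rank ≤ maxColSignChanges S + 1 ∧ ∀ i j, 0 < S i j * M i j := by
  have hseq : ∀ j t, colSeq S j t = 1 ∨ colSeq S j t = -1 := fun j t => by
    unfold colSeq; split_ifs <;> simp [hS]
  let F : Fin n → Finset ℕ := fun j => signChanges (colSeq S j) (m - 1)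
  let p : Fin n → ℝ[X] := fun j => C (colSeq S j 0) * ∏ t ∈ F j, (C ((t : ℝ) + 1 / 2) - X)
  refine ⟨Matrix.of fun i j => (p j).eval ((i : ℕ) : ℝ), rank_of_eval_le _ p fun j => ?_,
    fun i j => ?_⟩
  · exact (natDegree_C_mul_le _ _).trans
      ((natDegree_prod_C_sub_X_le _ _).trans (card_signChanges_colSeq_le S j))
  · have hentry : S i j = colSeq S j 0 * (-1) ^ #((F j).filter (· < (i : ℕ))) := by
      rw [filter_lt_signChanges (by omega), ← eq_mul_neg_one_pow_card_signChanges (hseq j)]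
      simp [colSeq]
    have hsq : colSeq S j 0 * colSeq S j 0 = 1 := by rcases hseq j 0 with h | h <;> simp [h]
    calc 0 < (-1 : ℝ) ^ #((F j).filter (· < (i : ℕ))) * ∏ t ∈ F j, ((t : ℝ) + 1 / 2 - (i : ℕ)) :=
          neg_one_pow_card_filter_lt_mul_prod_pos _ _
      _ = S i j * (p j).eval ((i : ℕ) : ℝ) := by
          simp only [hentry, p, eval_mul, eval_C, eval_prod, eval_sub, eval_X]
          linear_combination (-(-1 : ℝ) ^ #((F j).filter (· < (i : ℕ))) *
            ∏ t ∈ F j, ((t : ℝ) + 1 / 2 - (i : ℕ))) * hsq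

lemma signRank_le_rank {m n : ℕ} {S M : Matrix (Fin m) (Fin n) ℝ}
    (hM : ∀ i j, 0 < S i j * M i j) : signRank S ≤ M.rank :=
  Nat.sInf_le ⟨M, rfl, hM⟩

/-- For any sign matrix `S`, `signrank S ≤ SC*(S) + 1`. -/
theorem signRank_le_minMaxColSignChanges_add_one {m n : ℕ}
    (S : Matrix (Fin m) (Fin n) ℝ) (hS : ∀ i j, S i j = 1 ∨ S i j = -1) :
    signRank S ≤ minMaxColSignChanges S + 1 := by
  obtain ⟨σ, hσ⟩ := ciInf_mem fun σ : Equiv.Perm (Fin m) => maxColSignChanges (S.submatrix σ id)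
  obtain ⟨M, hrank, hM⟩ :=
    exists_rank_le_maxColSignChanges_add_one (S.submatrix σ id) fun i j => hS (σ i) j
  calc signRank S ≤ (M.submatrix σ.symm id).rank :=
        signRank_le_rank fun i j => by simpa using hM (σ.symm i) j
    _ = M.rank := M.rank_submatrix σ.symm (Equiv.refl _)
    _ ≤ minMaxColSignChanges S + 1 := by rw [minMaxColSignChanges, ← hσ]; exact hrank
end

section
/- Let s : {1, …, m} → {+1, −1} be a sign sequence with at most k sign changes, i.e., |{ i ∈ {1, …, m−1} : s(i) ≠ s(i+1) }| ≤ k. Then there exists a real polynomial p of degree at most k such that s(i)·p(i) > 0 for all i ∈ {1, …, m}. -/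
/-- If a sign sequence `s : {1, …, m} → {+1, -1}` has at most `k` sign changes, then there
is a real polynomial `p` of degree at most `k` with `s i * p i > 0` for all `i ∈ {1, …, m}`.
Here the sequence is indexed by `Fin m`, with `i : Fin m` standing for the point
`(i : ℕ) + 1 ∈ {1, …, m}`. -/
theorem exists_polynomial_of_signChanges_le {m k : ℕ} (s : Fin m → ℝ)
    (hs : ∀ i, s i = 1 ∨ s i = -1)
    (hchanges : Nat.card {p : Fin m × Fin m // (p.2 : ℕ) = (p.1 : ℕ) + 1 ∧ s p.1 ≠ s p.2} ≤ k) :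
    ∃ p : Polynomial ℝ, p.natDegree ≤ k ∧
      ∀ i : Fin m, s i * p.eval ((i : ℕ) + 1 : ℝ) > 0 := by
  classical
  rcases Nat.eq_zero_or_pos m with hm | hm
  · subst hm
    exact ⟨1, by simp, fun i => i.elim0⟩
  set i0 : Fin m := ⟨0, hm⟩ with hi0
  set C : Finset (Fin m) :=
    Finset.univ.filter (fun i => ∃ h : (i : ℕ) + 1 < m, s i ≠ s ⟨(i : ℕ) + 1, h⟩) with hC
  have memC : ∀ i : Fin m, i ∈ C ↔ ∃ h : (i : ℕ) + 1 < m, s i ≠ s ⟨(i : ℕ) + 1, h⟩ := by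
    intro i; simp [hC]
  -- card bound
  have hCk : C.card ≤ k := by
    have hinj : ∃ f : {i : Fin m // i ∈ C} →
        {p : Fin m × Fin m // (p.2 : ℕ) = (p.1 : ℕ) + 1 ∧ s p.1 ≠ s p.2},
        Function.Injective f := by
      refine ⟨fun i => ⟨(i.1, ⟨(i.1 : ℕ) + 1, ((memC i.1).mp i.2).choose⟩),
        rfl, ((memC i.1).mp i.2).choose_spec⟩, ?_⟩
      intro a b hab
      have : (a.1 : Fin m) = b.1 := congrArg (fun x => x.1.1) hab
      exact Subtype.ext this
    obtain ⟨f, hf⟩ := hinj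
    have := Nat.card_le_card_of_injective f hf
    rw [Nat.card_eq_fintype_card, Fintype.card_coe] at this
    exact this.trans hchanges
  -- number of sign changes strictly before index n
  set a : ℕ → ℕ := fun n => (C.filter (fun c : Fin m => (c : ℕ) < n)).card with ha
  have key : ∀ n (h : n < m), s ⟨n, h⟩ = s i0 * (-1 : ℝ) ^ (a n) := by
    intro n
    induction n with
    | zero =>
      intro h
      have : (C.filter (fun c : Fin m => (c : ℕ) < 0)) = ∅ := by
        ext c; simp
      simp [ha, this, hi0]
    | succ n ih =>
      intro h
      have hn : n < m := Nat.lt_of_succ_lt h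
      set e : Fin m := ⟨n, hn⟩ with he
      by_cases hch : s ⟨n, hn⟩ = s ⟨n + 1, h⟩
      · -- no change at n : filter unchanged
        have heq : C.filter (fun c : Fin m => (c : ℕ) < n + 1) = C.filter (fun c : Fin m => (c : ℕ) < n) := by
          ext c
          simp only [Finset.mem_filter, and_congr_right_iff]
          intro hcC
          constructor
          · intro hlt
            rcases Nat.lt_succ_iff_lt_or_eq.mp hlt with h' | h'
            · exact h'
            · exfalso
              have hcE : c = e := Fin.ext h'
              obtain ⟨h1, h2⟩ := (memC c).mp hcC
              apply h2
              have : (⟨(c : ℕ) + 1, h1⟩ : Fin m) = ⟨n + 1, h⟩ := Fin.ext (by simp [h'])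
              rw [this, hcE, he]
              exact hch
          · intro h'; exact Nat.lt_succ_of_lt h'
        have : a (n + 1) = a n := by simp only [ha]; rw [heq]
        rw [this, ← hch]
        exact ih hn
      · -- change at n
        have heC : e ∈ C := (memC e).mpr ⟨h, hch⟩
        have hnot : e ∉ C.filter (fun c : Fin m => (c : ℕ) < n) := by
          simp [he]
        have heq : C.filter (fun c : Fin m => (c : ℕ) < n + 1)
            = insert e (C.filter (fun c : Fin m => (c : ℕ) < n)) := by
          ext c
          simp only [Finset.mem_filter, Finset.mem_insert]
          constructor
          · rintro ⟨hcC, hlt⟩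
            rcases Nat.lt_succ_iff_lt_or_eq.mp hlt with h' | h'
            · exact Or.inr ⟨hcC, h'⟩
            · exact Or.inl (Fin.ext h')
          · rintro (rfl | ⟨hcC, hlt⟩)
            · exact ⟨heC, Nat.lt_succ_self n⟩
            · exact ⟨hcC, Nat.lt_succ_of_lt hlt⟩
        have hstep : a (n + 1) = a n + 1 := by
          simp only [ha]; rw [heq, Finset.card_insert_of_notMem hnot]
        have hflip : s ⟨n + 1, h⟩ = -s ⟨n, hn⟩ := by
          rcases hs ⟨n, hn⟩ with h1 | h1 <;> rcases hs ⟨n + 1, h⟩ with h2 | h2 <;>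
            rw [h1] at hch ⊢ <;> rw [h2] at hch ⊢ <;> first | (exact absurd rfl hch) | norm_num
        rw [hflip, ih hn, hstep]
        ring
  -- the polynomial
  set ε : ℝ := s i0 * (-1 : ℝ) ^ C.card with hε
  refine ⟨Polynomial.C ε * ∏ c ∈ C, (Polynomial.X - Polynomial.C ((c : ℕ) + 3/2 : ℝ)), ?_, ?_⟩
  · -- degree bound
    refine le_trans (Polynomial.natDegree_mul_le) ?_
    rw [Polynomial.natDegree_C, zero_add]
    refine le_trans (Polynomial.natDegree_prod_le _ _) ?_
    calc ∑ c ∈ C, (Polynomial.X - Polynomial.C ((c : ℕ) + 3/2 : ℝ)).natDegree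
        = ∑ c ∈ C, 1 := by
          refine Finset.sum_congr rfl fun c _ => ?_
          exact Polynomial.natDegree_X_sub_C _
      _ = C.card := by simp
      _ ≤ k := hCk
  · intro i
    have heval : (Polynomial.C ε *
        ∏ c ∈ C, (Polynomial.X - Polynomial.C ((c : ℕ) + 3/2 : ℝ))).eval ((i : ℕ) + 1 : ℝ)
        = ε * ∏ c ∈ C, (((i : ℕ) + 1 : ℝ) - ((c : ℕ) + 3/2)) := by
      simp [Polynomial.eval_prod]
    rw [heval]
    -- split the product
    set A := ∏ c ∈ C.filter (fun c : Fin m => (c : ℕ) < (i : ℕ)),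
        (((i : ℕ) + 1 : ℝ) - ((c : ℕ) + 3/2)) with hA
    set B := ∏ c ∈ C.filter (fun c : Fin m => ¬ (c : ℕ) < (i : ℕ)),
        (((i : ℕ) + 1 : ℝ) - ((c : ℕ) + 3/2)) with hB
    have hsplit : (∏ c ∈ C, (((i : ℕ) + 1 : ℝ) - ((c : ℕ) + 3/2))) = A * B := by
      rw [hA, hB, Finset.prod_filter_mul_prod_filter_not]
    have hApos : 0 < A := by
      refine Finset.prod_pos fun c hc => ?_
      have hlt : (c : ℕ) < (i : ℕ) := (Finset.mem_filter.mp hc).2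
      have : ((c : ℕ) : ℝ) + 1 ≤ ((i : ℕ) : ℝ) := by exact_mod_cast hlt
      linarith
    set b : ℕ := (C.filter (fun c : Fin m => ¬ (c : ℕ) < (i : ℕ))).card with hb
    set B' := ∏ c ∈ C.filter (fun c : Fin m => ¬ (c : ℕ) < (i : ℕ)),
        (((c : ℕ) + 3/2) - (((i : ℕ) + 1 : ℝ))) with hB'
    have hB'pos : 0 < B' := by
      refine Finset.prod_pos fun c hc => ?_
      have hle : (i : ℕ) ≤ (c : ℕ) := Nat.le_of_not_lt (Finset.mem_filter.mp hc).2
      have : ((i : ℕ) : ℝ) ≤ ((c : ℕ) : ℝ) := by exact_mod_cast hle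
      linarith
    have hBeq : B = (-1 : ℝ) ^ b * B' := by
      rw [hB, hB', hb, ← Finset.prod_const, ← Finset.prod_mul_distrib]
      refine Finset.prod_congr rfl fun c _ => by ring
    have hab : a (i : ℕ) + b = C.card := by
      rw [ha, hb]
      exact Finset.card_filter_add_card_filter_not _
    have hsi : s i = s i0 * (-1 : ℝ) ^ (a (i : ℕ)) := by
      have := key (i : ℕ) i.2
      simpa using this
    have hs0 : s i0 * s i0 = 1 := by rcases hs i0 with h | h <;> rw [h] <;> norm_num
    have hmain : s i * (ε * ∏ c ∈ C, (((i : ℕ) + 1 : ℝ) - ((c : ℕ) + 3/2)))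
        = (s i0 * s i0) * ((-1 : ℝ) ^ (a (i : ℕ)) * (-1 : ℝ) ^ (a (i : ℕ)))
          * ((-1 : ℝ) ^ b * (-1 : ℝ) ^ b) * (A * B') := by
      rw [hsplit, hsi, hε, hBeq, ← hab, pow_add]
      ring
    rw [hmain, hs0]
    have h1 : ((-1 : ℝ) ^ (a (i : ℕ)) * (-1 : ℝ) ^ (a (i : ℕ))) = 1 := by
      rw [← pow_add]; exact Even.neg_one_pow ⟨a (i : ℕ), by ring⟩
    have h2 : ((-1 : ℝ) ^ b * (-1 : ℝ) ^ b) = 1 := by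
      rw [← pow_add]; exact Even.neg_one_pow ⟨b, by ring⟩
    rw [h1, h2]
    simpa using mul_pos hApos hB'pos
end

section
/- There exist no real numbers v₁, v₂, v₃, c₁, c₂, c₃ and no threshold θ ≥ 0 such that for all i, j ∈ {1, 2, 3}: |v_j − c_i| ≤ θ if and only if i ≠ j. In other words, the 3×3 voting pattern with downvotes exactly on the diagonal and upvotes everywhere else cannot be realized by the unidimensional proximity voting model. -/
/-!
Every voter `j` downvotes its own comment, so it lies strictly above or strictly below `c j`
by more than `θ`. Two voters on the same side cannot upvote each other's comments: from
`θ < v i - c i`, `θ < v j - c j`, `v j - c i ≤ θ` and `v i - c j ≤ θ`, adding gives `2θ < 2θ`.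
Hence the side is an injective map to `Bool`, and at most two voters fit the pattern.
-/

section ProximityVoting

variable {ι : Type*} {v c : ι → ℝ} {θ : ℝ}

lemma eq_of_lt_sub_of_lt_sub (h : ∀ i j, |v j - c i| ≤ θ ↔ i ≠ j) {i j : ι}
    (hi : θ < v i - c i) (hj : θ < v j - c j) : i = j := by
  by_contra hij
  have hji := (abs_le.mp ((h i j).mpr hij)).2
  have hij := (abs_le.mp ((h j i).mpr (Ne.symm hij))).2
  linarith

lemma eq_of_lt_sub_of_lt_sub' (h : ∀ i j, |v j - c i| ≤ θ ↔ i ≠ j) {i j : ι}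
    (hi : θ < c i - v i) (hj : θ < c j - v j) : i = j := by
  refine eq_of_lt_sub_of_lt_sub (v := (-v ·)) (c := (-c ·)) (θ := θ) (fun i j => ?_) ?_ ?_
  · rw [neg_sub_neg, abs_sub_comm]
    exact h i j
  · linarith
  · linarith

lemma lt_sub_or_lt_sub_of_abs_sub_le_iff_ne (h : ∀ i j, |v j - c i| ≤ θ ↔ i ≠ j) (i : ι) :
    θ < v i - c i ∨ θ < c i - v i := by
  rw [← neg_sub (v i) (c i), ← lt_abs]
  exact lt_of_not_ge fun hle => (h i i).mp hle rfl

theorem card_le_two_of_abs_sub_le_iff_ne [Fintype ι] (h : ∀ i j, |v j - c i| ≤ θ ↔ i ≠ j) :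
    Fintype.card ι ≤ 2 := by
  refine (Fintype.card_le_of_injective (fun i => decide (θ < v i - c i)) fun i j hij => ?_).trans
    (Fintype.card_bool).le
  simp only [decide_eq_decide] at hij
  by_cases hi : θ < v i - c i
  · exact eq_of_lt_sub_of_lt_sub h hi (hij.mp hi)
  · exact eq_of_lt_sub_of_lt_sub' h
      ((lt_sub_or_lt_sub_of_abs_sub_le_iff_ne h i).resolve_left hi)
      ((lt_sub_or_lt_sub_of_abs_sub_le_iff_ne h j).resolve_left (mt hij.mpr hi))

end ProximityVoting

/-- The 3×3 voting pattern with downvotes exactly on the diagonal and upvotes everywhere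
else cannot be realized by the unidimensional proximity voting model: there are no real
opinions `v j`, `c i` and threshold `θ ≥ 0` such that `|v j - c i| ≤ θ ↔ i ≠ j`. -/
theorem no_unidimensional_proximity_realization :
    ¬ ∃ (v c : Fin 3 → ℝ) (θ : ℝ), 0 ≤ θ ∧
      ∀ i j : Fin 3, |v j - c i| ≤ θ ↔ i ≠ j := by
  rintro ⟨v, c, θ, -, h⟩
  simpa using card_le_two_of_abs_sub_le_iff_ne h
end

section
/- There exist no nonzero real numbers v₁, v₂, v₃, c₁, c₂, c₃ such that v_j·c_i ≥ 0 for all pairs (i, j) ∈ {1,2,3}² with (i, j) ≠ (2, 2), and v₂·c₂ < 0. In other words, the 3×3 voting pattern with a single downvote at position (2,2) and upvotes everywhere else cannot be realized by the unidimensional directional voting model. -/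
/-!
The vote matrix `v j * c i` has rank one, so its 2×2 minors vanish:
`(v 0 * c 0) * (v 1 * c 1) = (v 0 * c 1) * (v 1 * c 0)`. Hence three upvotes in a 2×2 minor,
one of them strict, force the fourth entry to be an upvote as well; the strict upvote
comes from the nonzero opinions `v 0` and `c 0`.
-/

theorem mul_nonneg_of_mul_pos_of_cross_nonneg {R : Type*} [CommRing R] [LinearOrder R]
    [IsStrictOrderedRing R] {a b c d : R} (hac : 0 < a * c) (had : 0 ≤ a * d)
    (hbc : 0 ≤ b * c) : 0 ≤ b * d :=
  nonneg_of_mul_nonneg_right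
    (calc 0 ≤ a * d * (b * c) := mul_nonneg had hbc
      _ = a * c * (b * d) := by ring)
    hac

-- The index `1 : Fin 3` is the middle position `2` of `{1, 2, 3}`.
/-- The 3×3 voting pattern with a single downvote at the middle position `(2,2)` and
upvotes everywhere else cannot be realized by the unidimensional directional voting model:
there are no nonzero real opinions `v j`, `c i` (indexed by `Fin 3`, where the index
`1 : Fin 3` is the middle one, i.e. position 2 of `{1,2,3}`) with `v j * c i ≥ 0` for all
`(i, j) ≠ (2, 2)` and `v 2 * c 2 < 0`. -/
theorem no_unidimensional_directional_realization :
    ¬ ∃ v c : Fin 3 → ℝ, (∀ j, v j ≠ 0) ∧ (∀ i, c i ≠ 0) ∧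
      (∀ i j : Fin 3, ¬(i = 1 ∧ j = 1) → v j * c i ≥ 0) ∧ v 1 * c 1 < 0 := by
  rintro ⟨v, c, hv, hc, hup, hdown⟩
  have hpos : 0 < v 0 * c 0 :=
    (hup 0 0 (by decide)).lt_of_ne' (mul_ne_zero (hv 0) (hc 0))
  have hmid : 0 ≤ v 1 * c 1 :=
    mul_nonneg_of_mul_pos_of_cross_nonneg hpos (hup 1 0 (by decide)) (hup 0 1 (by decide))
  exact hmid.not_gt hdown
end

section
/- For every n ≥ 1, the n×n sign matrix B = 2·Iₙ − 1ₙ (with +1 on the diagonal and −1 off the diagonal) has sign-rank at most 3: there exists a real n×n matrix M of rank at most 3 such that M_{ii} > 0 for all i and M_{ij} < 0 for all i ≠ j. -/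
/-- For every `n ≥ 1`, the sign matrix `B = 2·Iₙ − 1ₙ` (with `+1` on the diagonal and `−1`
off the diagonal) has sign-rank at most 3: there is a real `n × n` matrix `M` of rank at
most 3 with `M i i > 0` for all `i` and `M i j < 0` for all `i ≠ j`. -/
theorem signRank_two_id_sub_ones_le_three (n : ℕ) (hn : 1 ≤ n) :
    ∃ M : Matrix (Fin n) (Fin n) ℝ, M.rank ≤ 3 ∧
      (∀ i, M i i > 0) ∧ (∀ i j, i ≠ j → M i j < 0) := by
  set A : Matrix (Fin n) (Fin 3) ℝ := fun i => ![1/2 - (i : ℝ)^2, 1, 2 * (i : ℝ)]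
  set B : Matrix (Fin 3) (Fin n) ℝ := fun k j => ![(1 : ℝ), -(j : ℝ)^2, (j : ℝ)] k
  refine ⟨A * B, ?_, ?_, ?_⟩
  · calc (A * B).rank ≤ A.rank := Matrix.rank_mul_le_left A B
    _ ≤ Fintype.card (Fin 3) := Matrix.rank_le_card_width A
    _ = 3 := by simp
  · intro i
    have : (A * B) i i = 1/2 - ((i : ℝ) - i)^2 := by
      rw [Matrix.mul_apply]; simp [Fin.sum_univ_three, A, B]
      ring
    rw [this]; norm_num
  · intro i j hij
    have h : (A * B) i j = 1/2 - ((i : ℝ) - j)^2 := by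
      rw [Matrix.mul_apply]; simp [Fin.sum_univ_three, A, B]
      ring
    rw [h]
    have hd : (i : ℤ) ≠ (j : ℤ) := by
      exact_mod_cast fun h => hij (Fin.ext (by exact_mod_cast h))
    have h1 : (1 : ℤ) ≤ ((i : ℤ) - j)^2 := by
      have : (i : ℤ) - j ≠ 0 := sub_ne_zero.mpr hd
      have := sq_pos_of_ne_zero this; omega
    have h1' : (1 : ℝ) ≤ ((i : ℝ) - j)^2 := by exact_mod_cast h1
    linarith
end
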